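/- Let P be a real polynomial on ℝ^n with P(0) = 0. Then for every t with 0 < t < 1/ad(P), the function x ↦ |P(x)|^{−t} is Lebesgue integrable on some neighborhood of 0 in ℝ^n; that is, the integration index i(P) (the supremum of those t > 0 for which |P|^{−t} is integrable on some neighborhood of 0) satisfies i(P) ≥ 1/ad(P). -/

import Mathlib

open MeasureTheory Metric MvPolynomial
open scoped ENNReal NNReal

/-!
Order the variables so that the admissible monomial `x^α` is the lexicographically leading one.
Viewed as a polynomial in `x₀` over the polynomials in the remaining variables, `P` then has
degree `α₀`, and the coefficient `R` of `x₀ ^ α₀` has lexicographically leading exponent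
`(α₁, …, αₙ₋₁)`. In one variable, a real polynomial `q` of degree `e` satisfies
`|q x| ≥ |lc q| * ∏ⱼ |x - Re zⱼ|` over its complex roots `zⱼ`, so Hölder's inequality with `e`
exponents `1 / e` gives `∫ |q| ^ (-t) ≤ C * |lc q| ^ (-t)` on a set of finite measure whenever
`t * e < 1`, with `C` independent of `q`. Integrating first in `x₀` thus bounds `∫ |P| ^ (-t)` by
`C * ∫ |R| ^ (-t)`, and induction on the number of variables concludes.
-/

/-- `α` is an admissible index (i.e. `x^α` is an admissible monomial) for the real
polynomial `P` on `ℝ^n`. -/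
def IsAdmissibleIndex {n : ℕ} (P : MvPolynomial (Fin n) ℝ) (α : Fin n →₀ ℕ) : Prop :=
  MvPolynomial.coeff α P ≠ 0 ∧
  ∃ σ : Equiv.Perm (Fin n),
    (∃ h : 0 < n, 1 ≤ α (σ ⟨0, h⟩)) ∧
    ∀ β : Fin n →₀ ℕ, β ≠ α → MvPolynomial.coeff β P ≠ 0 →
      ∃ j : Fin n, β (σ j) < α (σ j) ∧ ∀ k : Fin n, k < j → α (σ k) = β (σ k)

/-- The admissible degree `ad(P) = min {|α| : α admissible index for P}`. -/
noncomputable def admissibleDegree {n : ℕ} (P : MvPolynomial (Fin n) ℝ) : ℕ :=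
  sInf {k : ℕ | ∃ α : Fin n →₀ ℕ, IsAdmissibleIndex P α ∧ (∑ i, α i) = k}

theorem Finsupp.toLex_cons_lt_toLex_cons_iff {n : ℕ} {M : Type*} [Zero M] [LinearOrder M]
    {a b : M} {β γ : Fin n →₀ M} :
    toLex (cons a β) < toLex (cons b γ) ↔ a < b ∨ a = b ∧ toLex β < toLex γ := by
  simp only [Finsupp.Lex.lt_iff, ofLex_toLex]
  constructor
  · rintro ⟨i, hlt, hi⟩
    induction i using Fin.cases with
    | zero => exact Or.inl (by simpa using hi)
    | succ i =>
      refine Or.inr ⟨by simpa using hlt 0 i.succ_pos, i, fun j hj => ?_, by simpa using hi⟩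
      simpa using hlt j.succ (Fin.succ_lt_succ_iff.2 hj)
  · rintro (hab | ⟨rfl, i, hlt, hi⟩)
    · exact ⟨0, fun j hj => absurd hj (Fin.not_lt_zero j), by simpa using hab⟩
    · refine ⟨i.succ, fun j hj => ?_, by simpa using hi⟩
      induction j using Fin.cases with
      | zero => simp
      | succ j => simpa using hlt j (Fin.succ_lt_succ_iff.1 hj)

theorem MvPolynomial.coeff_rename_equiv {σ τ R : Type*} [CommSemiring R] (e : σ ≃ τ)
    (P : MvPolynomial σ R) (β : τ →₀ ℕ) :
    (rename e P).coeff β = P.coeff (β.equivMapDomain e.symm) := by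
  have := coeff_rename_mapDomain e e.injective P (β.equivMapDomain e.symm)
  rwa [← Finsupp.equivMapDomain_eq_mapDomain, ← Finsupp.equivMapDomain_trans,
    e.symm_trans_self, Finsupp.equivMapDomain_refl] at this

def IsLexLeadingExponent {σ R : Type*} [LinearOrder σ] [CommSemiring R] (P : MvPolynomial σ R)
    (α : σ →₀ ℕ) : Prop :=
  coeff α P ≠ 0 ∧ ∀ β, β ≠ α → coeff β P ≠ 0 → toLex β < toLex α

namespace IsLexLeadingExponent

variable {R : Type*} [CommSemiring R] {n : ℕ} {P : MvPolynomial (Fin (n + 1)) R}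
  {α : Fin (n + 1) →₀ ℕ}

theorem natDegree_finSuccEquiv_le (h : IsLexLeadingExponent P α) :
    (finSuccEquiv R n P).natDegree ≤ α 0 := by
  refine Polynomial.natDegree_le_iff_coeff_eq_zero.2 fun k hk => ?_
  by_contra hQk
  obtain ⟨γ, hγ⟩ := ne_zero_iff.1 hQk
  rw [finSuccEquiv_coeff_coeff] at hγ
  have hne : Finsupp.cons k γ ≠ α := fun hα => by
    simp [← hα] at hk
  have := h.2 _ hne hγ
  rw [← Finsupp.cons_tail α, Finsupp.toLex_cons_lt_toLex_cons_iff] at this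
  omega

theorem coeff_finSuccEquiv (h : IsLexLeadingExponent P α) :
    IsLexLeadingExponent ((finSuccEquiv R n P).coeff (α 0)) α.tail := by
  refine ⟨by rw [finSuccEquiv_coeff_coeff, Finsupp.cons_tail]; exact h.1, fun β hβ hcoeff => ?_⟩
  rw [finSuccEquiv_coeff_coeff] at hcoeff
  have hne : Finsupp.cons (α 0) β ≠ α := fun hα => hβ (by rw [← hα, Finsupp.tail_cons])
  have := h.2 _ hne hcoeff
  rw [← Finsupp.cons_tail α, Finsupp.toLex_cons_lt_toLex_cons_iff] at this
  simpa using this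

end IsLexLeadingExponent

theorem IsAdmissibleIndex.exists_isLexLeadingExponent_rename {n : ℕ}
    {P : MvPolynomial (Fin n) ℝ} {α : Fin n →₀ ℕ} (h : IsAdmissibleIndex P α) :
    ∃ σ : Equiv.Perm (Fin n),
      IsLexLeadingExponent (rename σ.symm P) (α.equivMapDomain σ.symm) := by
  obtain ⟨hα, σ, -, hlex⟩ := h
  have hα' : (α.equivMapDomain σ.symm).equivMapDomain σ = α := by
    rw [← Finsupp.equivMapDomain_trans, σ.symm_trans_self, Finsupp.equivMapDomain_refl]
  refine ⟨σ, by rwa [coeff_rename_equiv, Equiv.symm_symm, hα'], fun β hβ hcoeff => ?_⟩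
  rw [coeff_rename_equiv, Equiv.symm_symm] at hcoeff
  have hne : β.equivMapDomain σ ≠ α := fun h => hβ (by rw [← h, ← Finsupp.equivMapDomain_trans,
    σ.self_trans_symm, Finsupp.equivMapDomain_refl])
  obtain ⟨j, hj, hlt⟩ := hlex _ hne hcoeff
  exact ⟨j, fun k hk => by simpa using (hlt k hk).symm, by simpa using hj⟩

theorem ENNReal.rpow_le_rpow_of_nonpos {x y : ℝ≥0∞} {z : ℝ} (hxy : x ≤ y) (hz : z ≤ 0) :
    y ^ z ≤ x ^ z := by
  rw [← neg_neg z, ENNReal.rpow_neg y, ENNReal.rpow_neg x]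
  exact ENNReal.inv_le_inv.2 (ENNReal.rpow_le_rpow hxy (neg_nonneg.2 hz))

theorem lintegral_ball_abs_rpow_neg_lt_top {s : ℝ} (hs : s < 1) :
    ∫⁻ y in ball (0 : ℝ) 1, ENNReal.ofReal |y| ^ (-s) < ∞ := by
  have hint : IntegrableOn (fun y : ℝ => ‖y‖ ^ (-s)) (ball 0 1) := by
    refine integrableOn_ball_of_norm_le_rpow (μ := volume) (C := 1) (α := s) (by simp)
      (by simpa using hs) (ae_of_all _ fun y => ?_)
      (measurable_norm.pow_const _).aestronglyMeasurable
    rw [one_mul, Real.norm_of_nonneg (Real.rpow_nonneg (norm_nonneg y) _)]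
  calc ∫⁻ y in ball (0 : ℝ) 1, ENNReal.ofReal |y| ^ (-s)
      = ∫⁻ y in ball (0 : ℝ) 1, ‖‖y‖ ^ (-s)‖ₑ := by
        refine lintegral_congr_ae (ae_restrict_of_ae ?_)
        filter_upwards [volume.ae_ne 0] with y hy
        rw [Real.enorm_of_nonneg (Real.rpow_nonneg (norm_nonneg y) _),
          ENNReal.ofReal_rpow_of_pos (abs_pos.2 hy), Real.norm_eq_abs]
    _ < ∞ := hint.hasFiniteIntegral

theorem exists_setLIntegral_abs_sub_rpow_neg_le {s : ℝ} (hs0 : 0 ≤ s) (hs1 : s < 1)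
    {S : Set ℝ} (hS : volume S ≠ ∞) :
    ∃ C < ∞, ∀ b : ℝ, ∫⁻ x in S, ENNReal.ofReal |x - b| ^ (-s) ≤ C := by
  set f : ℝ → ℝ≥0∞ := fun y => ENNReal.ofReal |y| ^ (-s)
  have hf_le : ∀ y, f y ≤ (ball 0 1).indicator f y + 1 := fun y => by
    by_cases hy : y ∈ ball (0 : ℝ) 1
    · simp [Set.indicator_of_mem hy]
    · have h1 : 1 ≤ ENNReal.ofReal |y| := by simpa [Real.dist_eq] using hy
      simpa [Set.indicator_of_notMem hy] using
        ENNReal.rpow_le_rpow_of_nonpos h1 (neg_nonpos.2 hs0)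
  refine ⟨(∫⁻ y in ball 0 1, f y) + volume S,
    ENNReal.add_lt_top.2 ⟨lintegral_ball_abs_rpow_neg_lt_top hs1, hS.lt_top⟩, fun b => ?_⟩
  calc ∫⁻ x in S, f (x - b)
      ≤ ∫⁻ x in S, ((ball 0 1).indicator f (x - b) + 1) := lintegral_mono fun x => hf_le _
    _ = (∫⁻ x in S, (ball 0 1).indicator f (x - b)) + volume S := by
        rw [lintegral_add_right _ measurable_const, setLIntegral_one]
    _ ≤ (∫⁻ x, (ball 0 1).indicator f (x - b)) + volume S := by
        gcongr; exact Measure.restrict_le_self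
    _ = (∫⁻ y in ball 0 1, f y) + volume S := by
        rw [lintegral_sub_right_eq_self (fun y => (ball 0 1).indicator f y),
          lintegral_indicator measurableSet_ball]

theorem Multiset.prod_map_eq_prod_coe {α β : Type*} [DecidableEq α] [CommMonoid β] (m : Multiset α)
    (f : α → β) : (m.map f).prod = ∏ x : m, f x := by
  rw [← Multiset.map_univ, ← Finset.prod_eq_multiset_prod]

theorem exists_setLIntegral_prod_abs_sub_rpow_neg_le {t : ℝ} (ht : 0 ≤ t) {e : ℕ}
    (hte : t * e < 1) {S : Set ℝ} (hS : volume S ≠ ∞) :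
    ∃ C < ∞, ∀ m : Multiset ℝ, Multiset.card m = e →
      ∫⁻ x in S, (m.map fun b => ENNReal.ofReal |x - b| ^ (-t)).prod ≤ C := by
  rcases eq_or_ne e 0 with rfl | he
  · refine ⟨volume S, hS.lt_top, fun m hm => ?_⟩
    simp [Multiset.card_eq_zero.1 hm]
  obtain ⟨C, hC, hbound⟩ :=
    exists_setLIntegral_abs_sub_rpow_neg_le (by positivity) hte hS
  have he' : (e : ℝ) ≠ 0 := Nat.cast_ne_zero.2 he
  refine ⟨C, hC, fun m hm => ?_⟩
  calc ∫⁻ x in S, (m.map fun b => ENNReal.ofReal |x - b| ^ (-t)).prod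
      = ∫⁻ x in S, ∏ b : m, (ENNReal.ofReal |x - b| ^ (-(t * e))) ^ (1 / (e : ℝ)) := by
        refine lintegral_congr fun x => ?_
        rw [Multiset.prod_map_eq_prod_coe]
        refine Finset.prod_congr rfl fun b _ => ?_
        rw [← ENNReal.rpow_mul]
        field_simp
    _ ≤ ∏ b : m, (∫⁻ x in S, ENNReal.ofReal |x - b| ^ (-(t * e))) ^ (1 / (e : ℝ)) := by
        refine ENNReal.lintegral_prod_norm_pow_le _
          (fun b _ => ((measurable_id.sub_const _).abs.ennreal_ofReal.pow_const _).aemeasurable)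
          ?_ fun _ _ => by positivity
        simp [hm, he']
    _ ≤ ∏ _b : m, C ^ (1 / (e : ℝ)) :=
        Finset.prod_le_prod' fun b _ => ENNReal.rpow_le_rpow (hbound b) (by positivity)
    _ = C := by
        rw [Finset.prod_const, Finset.card_univ, Multiset.card_coe, hm, ← ENNReal.rpow_natCast,
          ← ENNReal.rpow_mul, one_div_mul_cancel he', ENNReal.rpow_one]

theorem Polynomial.abs_leadingCoeff_mul_prod_le_abs_eval (q : Polynomial ℝ) (x : ℝ) :
    |q.leadingCoeff| * ((q.map (algebraMap ℝ ℂ)).roots.map fun z => |x - z.re|).prod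
      ≤ |q.eval x| := by
  have heval : |q.eval x| = |q.leadingCoeff| *
      ((q.map (algebraMap ℝ ℂ)).roots.map fun z => ‖(x : ℂ) - z‖).prod := by
    have hx : (q.map (algebraMap ℝ ℂ)).eval (x : ℂ) = ((q.eval x : ℝ) : ℂ) := by
      rw [Polynomial.eval_map_algebraMap]; exact (Polynomial.ofReal_eval q x).symm
    rw [← Real.norm_eq_abs, ← Complex.norm_real, ← hx,
      (IsAlgClosed.splits (q.map (algebraMap ℝ ℂ))).eval_eq_prod_roots, norm_mul,
      Polynomial.leadingCoeff_map]
    congr 1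
    · simp
    · exact (Multiset.prod_hom' _ (normHom : ℂ →*₀ ℝ) _).symm
  rw [heval]
  gcongr
  refine Multiset.prod_map_le_prod_map₀ _ _ (fun z _ => abs_nonneg _) fun z _ => ?_
  simpa using Complex.abs_re_le_norm ((x : ℂ) - z)

theorem exists_setLIntegral_abs_eval_rpow_neg_le {t : ℝ} (ht : 0 < t) {e : ℕ} (hte : t * e < 1)
    {S : Set ℝ} (hS : volume S ≠ ∞) :
    ∃ C < ∞, ∀ q : Polynomial ℝ, q.natDegree ≤ e →
      ∫⁻ x in S, ENNReal.ofReal |q.eval x| ^ (-t) ≤ C * ENNReal.ofReal |q.coeff e| ^ (-t) := by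
  obtain ⟨C, hC, hbound⟩ := exists_setLIntegral_prod_abs_sub_rpow_neg_le ht.le hte hS
  -- `C + 1` rather than `C`, so that the bound is `∞` when `q.coeff e = 0`
  refine ⟨C + 1, ENNReal.add_lt_top.2 ⟨hC, ENNReal.one_lt_top⟩, fun q hq => ?_⟩
  by_cases hc : q.coeff e = 0
  · simp [hc, ENNReal.zero_rpow_of_neg (neg_neg_of_pos ht)]
  have hdeg : q.natDegree = e := le_antisymm hq (Polynomial.le_natDegree_of_ne_zero hc)
  set roots := (q.map (algebraMap ℝ ℂ)).roots
  have hcard : Multiset.card (roots.map Complex.re) = e := by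
    rw [Multiset.card_map, ← (IsAlgClosed.splits _).natDegree_eq_card_roots,
      Polynomial.natDegree_map, hdeg]
  have hpt : ∀ x, ENNReal.ofReal |q.eval x| ^ (-t) ≤ ENNReal.ofReal |q.coeff e| ^ (-t) *
      ((roots.map Complex.re).map fun b => ENNReal.ofReal |x - b| ^ (-t)).prod := fun x => by
    have hlower := q.abs_leadingCoeff_mul_prod_le_abs_eval x
    rw [Polynomial.leadingCoeff, hdeg, Multiset.prod_map_eq_prod_coe] at hlower
    rw [Multiset.map_map, Multiset.prod_map_eq_prod_coe]
    calc ENNReal.ofReal |q.eval x| ^ (-t)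
        ≤ ENNReal.ofReal (|q.coeff e| * ∏ z : roots, |x - (z : ℂ).re|) ^ (-t) :=
          ENNReal.rpow_le_rpow_of_nonpos (ENNReal.ofReal_le_ofReal hlower) (neg_nonpos.2 ht.le)
      _ = _ := by
          rw [ENNReal.ofReal_mul (abs_nonneg _),
            ENNReal.ofReal_prod_of_nonneg (fun z _ => abs_nonneg _),
            ENNReal.mul_rpow_of_ne_top ENNReal.ofReal_ne_top
              (ENNReal.prod_ne_top fun z _ => ENNReal.ofReal_ne_top),
            ← ENNReal.prod_rpow_of_ne_top (fun z _ => ENNReal.ofReal_ne_top)]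
          rfl
  calc ∫⁻ x in S, ENNReal.ofReal |q.eval x| ^ (-t)
      ≤ ∫⁻ x in S, ENNReal.ofReal |q.coeff e| ^ (-t) *
          ((roots.map Complex.re).map fun b => ENNReal.ofReal |x - b| ^ (-t)).prod :=
        lintegral_mono hpt
    _ = ENNReal.ofReal |q.coeff e| ^ (-t) * ∫⁻ x in S,
          ((roots.map Complex.re).map fun b => ENNReal.ofReal |x - b| ^ (-t)).prod := by
        refine lintegral_const_mul' _ _ ?_
        rw [ENNReal.ofReal_rpow_of_pos (abs_pos.2 hc)]
        exact ENNReal.ofReal_ne_top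
    _ ≤ ENNReal.ofReal |q.coeff e| ^ (-t) * C := by gcongr; exact hbound _ hcard
    _ ≤ (C + 1) * ENNReal.ofReal |q.coeff e| ^ (-t) := by rw [mul_comm]; gcongr; exact le_self_add

theorem MeasureTheory.lintegral_pi_fin_succ {X : Type*} [MeasurableSpace X] {n : ℕ}
    (μ : Measure X) [SigmaFinite μ] {f : (Fin (n + 1) → X) → ℝ≥0∞} (hf : Measurable f) :
    ∫⁻ x, f x ∂(Measure.pi fun _ => μ) =
      ∫⁻ y, ∫⁻ a, f (Fin.cons a y) ∂μ ∂(Measure.pi fun _ => μ) := by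
  set e := (MeasurableEquiv.piFinSuccAbove (fun _ : Fin (n + 1) => X) 0).symm
  have he : MeasurePreserving e (μ.prod (Measure.pi fun _ => μ)) (Measure.pi fun _ => μ) :=
    (measurePreserving_piFinSuccAbove (fun _ => μ) 0).symm
  rw [← he.lintegral_comp_emb e.measurableEmbedding,
    lintegral_prod_symm (fun p => f (e p)) (hf.comp e.measurable).aemeasurable]
  simp [e, MeasurableEquiv.piFinSuccAbove_symm_apply, Fin.insertNthEquiv, Fin.insertNth_zero']

theorem IsLexLeadingExponent.lintegral_abs_eval_rpow_neg_lt_top {n : ℕ}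
    {P : MvPolynomial (Fin n) ℝ} {α : Fin n →₀ ℕ} (hα : IsLexLeadingExponent P α) {t : ℝ}
    (ht : 0 < t) (htα : t * ↑(∑ i, α i) < 1) {S : Set ℝ} (hS : volume S ≠ ∞) :
    ∫⁻ x, ENNReal.ofReal |eval x P| ^ (-t) ∂(Measure.pi fun _ => volume.restrict S) < ∞ := by
  induction n with
  | zero =>
    have hP : ∀ x : Fin 0 → ℝ, eval x P = coeff α P := fun x => by
      rw [Subsingleton.elim α 0]
      conv_lhs => rw [P.eq_C_of_isEmpty]
      exact eval_C _
    simp only [hP, lintegral_const, Measure.pi_univ, Finset.univ_eq_empty, Finset.prod_empty,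
      mul_one, ENNReal.ofReal_rpow_of_pos (abs_pos.2 hα.1), ENNReal.ofReal_lt_top]
  | succ n ih =>
    set R := (finSuccEquiv ℝ n P).coeff (α 0)
    have hsum : ∑ i, α i = α 0 + ∑ i, α.tail i := Fin.sum_univ_succ _
    have hdiv : t * α 0 < 1 ∧ t * ↑(∑ i, α.tail i) < 1 := by
      constructor <;> refine lt_of_le_of_lt ?_ htα <;> gcongr <;> omega
    obtain ⟨C, hC, hbound⟩ := exists_setLIntegral_abs_eval_rpow_neg_le ht hdiv.1 hS
    have hinner : ∀ y : Fin n → ℝ, ∫⁻ a in S, ENNReal.ofReal |eval (Fin.cons a y) P| ^ (-t)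
        ≤ C * ENNReal.ofReal |eval y R| ^ (-t) := fun y => by
      simp_rw [eval_eq_eval_mv_eval']
      simpa [R] using hbound _ ((Polynomial.natDegree_map_le).trans
        hα.natDegree_finSuccEquiv_le)
    rw [lintegral_pi_fin_succ _ ((continuous_eval P).abs.measurable.ennreal_ofReal.pow_const _)]
    calc _ ≤ ∫⁻ y, C * ENNReal.ofReal |eval y R| ^ (-t) ∂(Measure.pi fun _ => volume.restrict S) :=
          lintegral_mono hinner
      _ = C * ∫⁻ y, ENNReal.ofReal |eval y R| ^ (-t) ∂(Measure.pi fun _ => volume.restrict S) :=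
          lintegral_const_mul' _ _ hC.ne
      _ < ∞ := ENNReal.mul_lt_top hC (ih hα.coeff_finSuccEquiv hdiv.2)

theorem IsAdmissibleIndex.lintegral_abs_eval_rpow_neg_lt_top {n : ℕ}
    {P : MvPolynomial (Fin n) ℝ} {α : Fin n →₀ ℕ} (hα : IsAdmissibleIndex P α) {t : ℝ}
    (ht : 0 < t) (htα : t * ↑(∑ i, α i) < 1) {S : Set ℝ} (hS : volume S ≠ ∞) :
    ∫⁻ x, ENNReal.ofReal |eval x P| ^ (-t) ∂(Measure.pi fun _ => volume.restrict S) < ∞ := by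
  obtain ⟨σ, hσ⟩ := hα.exists_isLexLeadingExponent_rename
  have hsum : ∑ i, α.equivMapDomain σ.symm i = ∑ i, α i := by
    simpa using Equiv.sum_comp σ α
  have hperm : MeasurePreserving (MeasurableEquiv.arrowCongr' σ (MeasurableEquiv.refl ℝ))
      (Measure.pi fun _ => volume.restrict S) (Measure.pi fun _ => volume.restrict S) :=
    measurePreserving_arrowCongr' _ _ σ _ fun _ => MeasurePreserving.id _
  rw [← hperm.lintegral_comp_emb (MeasurableEquiv.measurableEmbedding _)]
  convert hσ.lintegral_abs_eval_rpow_neg_lt_top ht (hsum ▸ htα) hS using 6 with x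
  simp [eval_rename, MeasurableEquiv.arrowCongr', Equiv.arrowCongr', Equiv.arrowCongr]
  rfl

theorem exists_isAdmissibleIndex_sum_eq_admissibleDegree {n : ℕ} {P : MvPolynomial (Fin n) ℝ}
    (hP : admissibleDegree P ≠ 0) :
    ∃ α, IsAdmissibleIndex P α ∧ ∑ i, α i = admissibleDegree P := by
  have hne : {k | ∃ α : Fin n →₀ ℕ, IsAdmissibleIndex P α ∧ ∑ i, α i = k}.Nonempty :=
    Set.nonempty_iff_ne_empty.2 fun h => hP (by rw [admissibleDegree, h, Nat.sInf_empty])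
  exact Nat.sInf_mem hne

theorem statement11_general (n : ℕ) (P : MvPolynomial (Fin n) ℝ) :
    ∀ t : ℝ, 0 < t → t < 1 / (admissibleDegree P : ℝ) →
      ∃ U ∈ nhds (0 : EuclideanSpace ℝ (Fin n)),
        ∫⁻ x in U, (ENNReal.ofReal |eval (fun i => x i) P|) ^ (-t) < ⊤ := by
  intro t ht htd
  have hd : admissibleDegree P ≠ 0 := fun h => by simp [h] at htd; linarith
  obtain ⟨α, hα, hαd⟩ := exists_isAdmissibleIndex_sum_eq_admissibleDegree hd
  set B : Set (Fin n → ℝ) := Set.univ.pi fun _ => Set.Ioo (-1) 1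
  refine ⟨WithLp.ofLp ⁻¹' B, (isOpen_set_pi Set.finite_univ fun _ _ => isOpen_Ioo).preimage
    (PiLp.continuous_ofLp 2 _) |>.mem_nhds (by simp), ?_⟩
  rw [(PiLp.volume_preserving_ofLp (Fin n)).setLIntegral_comp_preimage_emb
      (MeasurableEquiv.toLp 2 (Fin n → ℝ)).symm.measurableEmbedding
      (fun y => ENNReal.ofReal |eval y P| ^ (-t)) B,
    volume_pi, Measure.restrict_pi_pi]
  refine hα.lintegral_abs_eval_rpow_neg_lt_top ht ?_ (by simp)
  rw [hαd]
  exact (lt_div_iff₀ (Nat.cast_pos.2 (Nat.pos_of_ne_zero hd))).1 htd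

/-- For a polynomial `P` on `ℝ^n` with `P(0) = 0`, and any `0 < t < 1/ad(P)`, the
function `|P|^{-t}` is Lebesgue integrable on some neighborhood of `0`; that is, the
integration index satisfies `i(P) ≥ 1/ad(P)`. -/
theorem statement11 (n : ℕ) (P : MvPolynomial (Fin n) ℝ)
    (hP0 : eval (fun _ => (0 : ℝ)) P = 0) :
    ∀ t : ℝ, 0 < t → t < 1 / (admissibleDegree P : ℝ) →
      ∃ U ∈ nhds (0 : EuclideanSpace ℝ (Fin n)),
        ∫⁻ x in U, (ENNReal.ofReal |eval (fun i => x i) P|) ^ (-t) < ⊤ :=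
  statement11_general n P
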